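/- arXiv:2101.10962 — 3 statements merged into one kernel-verified Lean document; each statement's English description precedes it below -/
import Mathlib

section
/- In the non-stationary AR(1) model with sub-Gaussian noise, assume |fᵢ| ≤ C₁√(log T) for all i, let k ∈ (0,1) and let the penalty parameter λ > 0 satisfy k·λ = (2√2·A₃·σ₀²·(c₁+1)/(1−α₁))·log(2T)·√(log(2T)/T) and k·λ ≥ 2A₂σ₀·log(2T)/√T. Let β̂_T minimize the penalized objective (1/(2T))‖x_{1:T} − Xβ'‖₂² + λ‖Δ'‖₁ over β' ∈ ℝ^{T+1} and set e = β̂_T − β. Then on the event 𝒜 = 𝒜₁ ∩ 𝒜₂ ∩ 𝒜₃, ‖e_{I₃}‖₁ ≤ min{((1+k)/(1−k))·‖e_{I₂}‖₁, 2s·δ₀/(1−k)} + (k/(1−k))·‖e_{I₁}‖₁. -/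
open MeasureTheory ProbabilityTheory Finset Matrix

/-- The AR(1) recursion `xᵢ = fᵢ + α·x_{i−1} + εᵢ` with initial value `x₀`. -/
noncomputable def arSeq (x₀ α : ℝ) (f e : ℕ → ℝ) : ℕ → ℝ
  | 0 => x₀
  | i + 1 => f (i + 1) + α * arSeq x₀ α f e i + e (i + 1)

/-- The coefficient vector `β = (α₁, μ, Δ₂,…,Δ_T)ᵀ ∈ ℝ^{T+1}`. -/
noncomputable def betaVec (α : ℝ) (f : ℕ → ℝ) (T : ℕ) : Fin (T + 1) → ℝ := fun j =>
  if (j : ℕ) = 0 then α else if (j : ℕ) = 1 then f 1 else f (j : ℕ) - f ((j : ℕ) - 1)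

/-- The design matrix `X = (x_{0:T−1}, L) ∈ ℝ^{T×(T+1)}`. -/
noncomputable def designX (T : ℕ) (x : ℕ → ℝ) : Matrix (Fin T) (Fin (T + 1)) ℝ :=
  Matrix.of fun i j =>
    if (j : ℕ) = 0 then x (i : ℕ) else if (j : ℕ) ≤ (i : ℕ) + 1 then 1 else 0

/-- `ℓ₁` norm of the `Δ`-part (coordinates `2,…,T+1`) of a vector in `ℝ^{T+1}`. -/
noncomputable def l1Delta {T : ℕ} (b : Fin (T + 1) → ℝ) : ℝ :=
  ∑ j ∈ Finset.univ.filter (fun j : Fin (T + 1) => 2 ≤ (j : ℕ)), |b j|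

/-- The penalized least-squares objective `(1/(2T))‖x_{1:T} − Xb‖₂² + λ‖Δ'‖₁`. -/
noncomputable def penObj (T : ℕ) (x : ℕ → ℝ) (lam : ℝ) (b : Fin (T + 1) → ℝ) : ℝ :=
  (1 / (2 * (T : ℝ))) * ∑ i : Fin T, (x ((i : ℕ) + 1) - (designX T x).mulVec b i) ^ 2
    + lam * l1Delta b

/-- `ℓ₁` norm of a vector restricted to an index set `I` (`v_I` is `v` on `I`, zero off `I`). -/
noncomputable def l1On {n : ℕ} (I : Finset (Fin n)) (v : Fin n → ℝ) : ℝ := ∑ j ∈ I, |v j|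

/-- Event `𝒜₁`. -/
def eventA1 {Ω : Type*} (T : ℕ) (ε : ℕ → Ω → ℝ) (bd : ℝ) : Set Ω :=
  {ω | ∀ i ∈ Finset.Icc 1 T, |ε i ω| ≤ bd}

/-- Event `𝒜₂`. -/
def eventA2 {Ω : Type*} (T : ℕ) (ε : ℕ → Ω → ℝ) (bd : ℝ) : Set Ω :=
  {ω | ∀ j ∈ Finset.Icc 1 T, |∑ i ∈ Finset.Icc j T, ε i ω| ≤ bd}

/-- Event `𝒜₃`. -/
def eventA3 {Ω : Type*} (T : ℕ) (ε : ℕ → Ω → ℝ) (x : Ω → ℕ → ℝ) (bd : ℝ) : Set Ω :=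
  {ω | |∑ i ∈ Finset.Icc 1 T, ε i ω * x ω (i - 1)| ≤ bd}

/-! Comparing the penalized objective at `β̂` and at the true `β`, whose residual is exactly `ε`,
gives the basic inequality `λ (‖β̂‖_Δ - ‖β‖_Δ) ≤ (1/T) ⟨Xᵀε, e⟩`. The coordinates of `Xᵀε` are
`∑ εᵢ x_{i-1}` and the tail sums `∑_{i ≥ j} εᵢ`, so on `𝒜₂ ∩ 𝒜₃` the choice of `λ` makes them
at most `kλT`, whence `‖β̂‖_Δ - ‖β‖_Δ ≤ k ‖e‖₁`. The left side is at least
`‖e_{I₃}‖₁ - ‖e_{I₂}‖₁` and at least `‖e_{I₂}‖₁ + ‖e_{I₃}‖₁ - 2sδ₀`; solving each for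
`‖e_{I₃}‖₁` gives the two terms of the minimum. -/

section L1

variable {ι : Type*}

lemma dotProduct_le_mul_sum_abs [Fintype ι] (v e : ι → ℝ) {M : ℝ} (hv : ∀ j, |v j| ≤ M) :
    v ⬝ᵥ e ≤ M * ∑ j, |e j| := by
  rw [mul_sum]
  refine sum_le_sum fun j _ => ?_
  calc v j * e j ≤ |v j * e j| := le_abs_self _
    _ = |v j| * |e j| := abs_mul _ _
    _ ≤ M * |e j| := mul_le_mul_of_nonneg_right (hv j) (abs_nonneg _)

lemma sum_abs_filter_eq_zero_sub_le (S : Finset ι) (β e : ι → ℝ) :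
    ∑ j ∈ S with β j = 0, |e j| - ∑ j ∈ S with β j ≠ 0, |e j|
      ≤ ∑ j ∈ S, |β j + e j| - ∑ j ∈ S, |β j| := by
  have hoff : ∑ j ∈ S with β j = 0, |β j + e j| - ∑ j ∈ S with β j = 0, |β j|
      = ∑ j ∈ S with β j = 0, |e j| := by
    rw [← sum_sub_distrib]
    exact sum_congr rfl fun j hj => by simp [(mem_filter.1 hj).2]
  have hon : -∑ j ∈ S with β j ≠ 0, |e j|
      ≤ ∑ j ∈ S with β j ≠ 0, |β j + e j| - ∑ j ∈ S with β j ≠ 0, |β j| := by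
    rw [← sum_sub_distrib, ← sum_neg_distrib]
    refine sum_le_sum fun j _ => ?_
    have := abs_sub_abs_le_abs_sub (β j) (β j + e j)
    rw [sub_add_cancel_left, abs_neg] at this
    linarith
  rw [← sum_filter_add_sum_filter_not S (β · = 0) (fun j => |β j + e j|),
    ← sum_filter_add_sum_filter_not S (β · = 0) (fun j => |β j|)]
  linarith

lemma sum_abs_sub_two_mul_le (S : Finset ι) (β e : ι → ℝ) :
    ∑ j ∈ S, |e j| - 2 * ∑ j ∈ S, |β j| ≤ ∑ j ∈ S, |β j + e j| - ∑ j ∈ S, |β j| := by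
  have : ∑ j ∈ S, |e j| ≤ ∑ j ∈ S, (|β j + e j| + |β j|) :=
    sum_le_sum fun j _ => by simpa using abs_sub (β j + e j) (β j)
  rw [sum_add_distrib] at this
  linarith

lemma sum_abs_le_of_card_support_le [DecidableEq ι] (S : Finset ι) (β : ι → ℝ) {s : ℕ} {δ₀ : ℝ}
    (hδ₀ : 0 ≤ δ₀) (hs : ∃ K : Finset ι, K.card ≤ s ∧ ∀ j ∉ K, β j = 0)
    (hβ : ∀ j ∈ S, |β j| ≤ δ₀) : ∑ j ∈ S, |β j| ≤ s * δ₀ := by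
  obtain ⟨K, hK, hβK⟩ := hs
  calc ∑ j ∈ S, |β j| = ∑ j ∈ S ∩ K, |β j| := by
        refine (sum_subset inter_subset_left fun j hjS hjK => ?_).symm
        rw [hβK j fun hj => hjK (mem_inter.2 ⟨hjS, hj⟩), abs_zero]
    _ ≤ (S ∩ K).card • δ₀ := sum_le_card_nsmul _ _ _ fun j hj => hβ j (mem_inter.1 hj).1
    _ ≤ s * δ₀ := by
        rw [nsmul_eq_mul]
        gcongr
        exact_mod_cast (card_le_card inter_subset_right).trans hK

end L1

lemma penalized_lsq_basic_inequality {m ι : Type*} [Fintype m] [Fintype ι]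
    (X : Matrix m ι ℝ) (y ε : m → ℝ) (β b : ι → ℝ) {c : ℝ} (hc : 0 ≤ c)
    (pen : (ι → ℝ) → ℝ) (hy : y - X *ᵥ β = ε)
    (hmin : c * ∑ i, (y i - (X *ᵥ b) i) ^ 2 + pen b ≤ c * ∑ i, (y i - (X *ᵥ β) i) ^ 2 + pen β) :
    pen b - pen β ≤ 2 * c * (ε ⬝ᵥ X *ᵥ (b - β)) := by
  set u := X *ᵥ (b - β)
  have hyb : ∀ i, y i - (X *ᵥ b) i = ε i - u i := fun i => by
    simp only [u, Matrix.mulVec_sub, ← hy, Pi.sub_apply]; ring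
  have hyβ : ∀ i, y i - (X *ᵥ β) i = ε i := fun i => congrFun hy i
  have hexpand : ∑ i, (ε i - u i) ^ 2 = ∑ i, ε i ^ 2 - 2 * (ε ⬝ᵥ u) + ∑ i, u i ^ 2 := by
    simp only [dotProduct, mul_sum, ← sum_sub_distrib, ← sum_add_distrib]
    exact sum_congr rfl fun i _ => by ring
  have hu : 0 ≤ c * ∑ i, u i ^ 2 := mul_nonneg hc (sum_nonneg fun i _ => sq_nonneg (u i))
  simp only [hyb, hyβ, hexpand] at hmin
  linarith

lemma sum_fin_succ_eq_sum_Icc {M : Type*} [AddCommMonoid M] (g : ℕ → M) (T : ℕ) :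
    ∑ i : Fin T, g (i + 1) = ∑ m ∈ Icc 1 T, g m := by
  rw [Fin.sum_univ_eq_sum_range (fun i => g (i + 1)), range_eq_Ico, sum_Ico_add', zero_add,
    Ico_add_one_right_eq_Icc]

section Design

variable (T : ℕ) (x : ℕ → ℝ)

lemma designX_mulVec_betaVec (α : ℝ) (f : ℕ → ℝ) (i : Fin T) :
    (designX T x *ᵥ betaVec α f T) i = α * x i + f (i + 1) := by
  -- past coordinate `0`, `betaVec` lists the increments of `F`, which the block `L` telescopes
  let F : ℕ → ℝ := fun n => if n = 0 then 0 else f n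
  have hinc : ∀ j : Fin T, betaVec α f T j.succ = F (j + 1) - F j := fun j => by
    rcases Nat.eq_zero_or_pos (j : ℕ) with h | h
    · simp [betaVec, F, h]
    · simp [betaVec, F, h.ne']
  have hrange : (range T).filter (· ≤ (i : ℕ)) = range (i + 1) := by
    ext n; simp only [mem_filter, mem_range]; omega
  simp only [Matrix.mulVec, dotProduct, Fin.sum_univ_succ, designX, Matrix.of_apply, Fin.val_zero,
    Fin.val_succ, if_true, Nat.succ_ne_zero, if_false, add_le_add_iff_right, ite_mul, one_mul,
    zero_mul, hinc]
  rw [Fin.sum_univ_eq_sum_range (fun j => if j ≤ (i : ℕ) then F (j + 1) - F j else 0),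
    ← sum_filter, hrange, sum_range_sub]
  simp [betaVec, F, mul_comm]

lemma vecMul_designX_zero (g : ℕ → ℝ) :
    ((fun i : Fin T => g (i + 1)) ᵥ* designX T x) 0 = ∑ m ∈ Icc 1 T, g m * x (m - 1) := by
  simp only [Matrix.vecMul, dotProduct, designX, Matrix.of_apply, Fin.val_zero, if_true]
  exact sum_fin_succ_eq_sum_Icc (fun m => g m * x (m - 1)) T

lemma vecMul_designX_succ (g : ℕ → ℝ) (j : Fin T) :
    ((fun i : Fin T => g (i + 1)) ᵥ* designX T x) j.succ = ∑ m ∈ Icc ((j : ℕ) + 1) T, g m := by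
  have hfilter : (Icc 1 T).filter (fun m => (j : ℕ) + 1 ≤ m) = Icc ((j : ℕ) + 1) T := by
    ext m; simp only [mem_filter, mem_Icc]; omega
  simp only [Matrix.vecMul, dotProduct, designX, Matrix.of_apply, Fin.val_succ,
    Nat.succ_ne_zero, if_false, mul_ite, mul_one, mul_zero]
  rw [sum_fin_succ_eq_sum_Icc (fun m => if (j : ℕ) + 1 ≤ m then g m else 0), ← sum_filter,
    hfilter]

end Design

lemma arSeq_succ_sub_designX_mulVec_betaVec (x₀ α : ℝ) (f e : ℕ → ℝ) (T : ℕ) :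
    (fun i : Fin T => arSeq x₀ α f e (i + 1)) - designX T (arSeq x₀ α f e) *ᵥ betaVec α f T
      = fun i : Fin T => e (i + 1) := by
  ext i
  simp only [Pi.sub_apply, designX_mulVec_betaVec, arSeq]
  ring

lemma sqrt_div_mul_self {a T : ℝ} (hT : 0 < T) : √(a / T) * T = √(T * a) := by
  calc √(a / T) * T = √(a / T) * √T * √T := by rw [mul_assoc, Real.mul_self_sqrt hT.le]
    _ = √(T * a) := by
      rw [← Real.sqrt_mul' _ hT.le, div_mul_cancel₀ _ hT.ne', Real.sqrt_mul hT.le, mul_comm]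

lemma div_sqrt_mul_self (a T : ℝ) : a / √T * T = a * √T := by
  rw [div_mul_eq_mul_div, mul_div_assoc, Real.div_sqrt]

lemma le_min_add_of_l1_cone {E₁ E₂ E₃ k R : ℝ} (hk : k < 1) (hE₂ : 0 ≤ E₂)
    (h₁ : E₃ - E₂ ≤ k * (E₁ + E₂ + E₃)) (h₂ : E₂ + E₃ - R ≤ k * (E₁ + E₂ + E₃)) :
    E₃ ≤ min ((1 + k) / (1 - k) * E₂) (R / (1 - k)) + k / (1 - k) * E₁ := by
  have hk' : 0 < 1 - k := by linarith
  rw [← min_add_add_right, le_min_iff, div_mul_eq_mul_div, div_mul_eq_mul_div, ← add_div,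
    ← add_div, le_div_iff₀ hk', le_div_iff₀ hk']
  constructor
  · linarith
  · linarith [mul_nonneg hk'.le hE₂]

section DeltaCoordinates

variable {T : ℕ}

lemma sum_abs_eq_l1On_add_l1Delta (hT : 1 ≤ T) (v : Fin (T + 1) → ℝ) :
    ∑ j, |v j| = l1On {0, 1} v + l1Delta v := by
  have hsmall : univ.filter (fun j : Fin (T + 1) => ¬ 2 ≤ (j : ℕ)) = {0, 1} := by
    ext j
    simp only [mem_filter, mem_univ, true_and, mem_insert, mem_singleton, Fin.ext_iff,
      Fin.val_zero, Fin.val_one', Nat.mod_eq_of_lt (show 1 < T + 1 by omega)]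
    omega
  rw [← sum_filter_add_sum_filter_not univ (fun j : Fin (T + 1) => 2 ≤ (j : ℕ)), hsmall, l1On,
    l1Delta, add_comm]

lemma l1On_two_le_and (p : Fin (T + 1) → Prop) [DecidablePred p] (v : Fin (T + 1) → ℝ) :
    l1On (univ.filter fun j : Fin (T + 1) => 2 ≤ (j : ℕ) ∧ p j) v
      = ∑ j ∈ univ.filter (fun j : Fin (T + 1) => 2 ≤ (j : ℕ)) with p j, |v j| := by
  rw [l1On, filter_filter]

lemma l1On_eq_zero_le_of_l1Delta_sub_le (hT : 1 ≤ T) (β b : Fin (T + 1) → ℝ) {k δ₀ : ℝ} {s : ℕ}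
    (hk : k < 1) (hδ₀ : 0 ≤ δ₀)
    (hs : ∃ S : Finset (Fin (T + 1)), S.card ≤ s ∧ ∀ j ∉ S, β j = 0)
    (hΔ : ∀ j : Fin (T + 1), 2 ≤ (j : ℕ) → |β j| ≤ δ₀)
    (hcone : l1Delta b - l1Delta β ≤ k * ∑ j, |(b - β) j|) :
    l1On (univ.filter fun j : Fin (T + 1) => 2 ≤ (j : ℕ) ∧ β j = 0) (b - β) ≤
      min ((1 + k) / (1 - k) *
          l1On (univ.filter fun j : Fin (T + 1) => 2 ≤ (j : ℕ) ∧ β j ≠ 0) (b - β))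
        (2 * (s : ℝ) * δ₀ / (1 - k)) + k / (1 - k) * l1On {0, 1} (b - β) := by
  rw [l1On_two_le_and, l1On_two_le_and]
  set D := univ.filter fun j : Fin (T + 1) => 2 ≤ (j : ℕ)
  set e := b - β
  set E₂ := ∑ j ∈ D with β j ≠ 0, |e j|
  set E₃ := ∑ j ∈ D with β j = 0, |e j|
  have hb : ∀ j, β j + e j = b j := fun j => by simp [e]
  have hl1Delta : ∀ v, l1Delta v = ∑ j ∈ D, |v j| := fun _ => rfl
  have hsplit : ∑ j ∈ D, |e j| = E₂ + E₃ :=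
    (sum_filter_add_sum_filter_not D (β · = 0) _).symm.trans (add_comm _ _)
  have hcone' : l1Delta b - l1Delta β ≤ k * (l1On {0, 1} e + E₂ + E₃) := by
    rwa [sum_abs_eq_l1On_add_l1Delta hT, hl1Delta e, hsplit, ← add_assoc] at hcone
  have hoff : E₃ - E₂ ≤ l1Delta b - l1Delta β := by
    rw [hl1Delta, hl1Delta]
    simpa only [hb] using sum_abs_filter_eq_zero_sub_le D β e
  have hall : E₂ + E₃ - 2 * s * δ₀ ≤ l1Delta b - l1Delta β := by
    have hsupp : ∑ j ∈ D, |β j| ≤ s * δ₀ :=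
      sum_abs_le_of_card_support_le D β hδ₀ hs fun j hj => hΔ j (mem_filter.1 hj).2
    have := sum_abs_sub_two_mul_le D β e
    simp only [hb, hsplit] at this
    rw [hl1Delta, hl1Delta]
    linarith
  exact le_min_add_of_l1_cone hk (sum_nonneg fun _ _ => abs_nonneg _) (hoff.trans hcone')
    (hall.trans hcone')

end DeltaCoordinates

theorem stmt_8_general {Ωs : Type*}
    (T : ℕ) (hT : 2 ≤ T) (σ₀ : ℝ) (ε : ℕ → Ωs → ℝ)
    (x₀ α₁ : ℝ) (f : ℕ → ℝ)
    (A₁ A₂ A₃ c₁ : ℝ)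
    (s : ℕ) (δ₀ : ℝ) (hδ₀ : 0 ≤ δ₀)
    (hs : ∃ S : Finset (Fin (T + 1)), S.card ≤ s ∧ ∀ j ∉ S, betaVec α₁ f T j = 0)
    (hΔ : ∀ j : Fin (T + 1), 2 ≤ (j : ℕ) → |betaVec α₁ f T j| ≤ δ₀)
    (k lam : ℝ) (hk' : k < 1) (hlam : 0 < lam)
    (hklam : k * lam = 2 * Real.sqrt 2 * A₃ * σ₀ ^ 2 * (c₁ + 1) / (1 - α₁) *
      Real.log (2 * T) * Real.sqrt (Real.log (2 * T) / T))
    (hklam2 : 2 * A₂ * σ₀ * Real.log (2 * T) / Real.sqrt T ≤ k * lam)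
    (βhat : Ωs → Fin (T + 1) → ℝ)
    (hmin : ∀ ω, ∀ b : Fin (T + 1) → ℝ,
      penObj T (arSeq x₀ α₁ f (fun n => ε n ω)) lam (βhat ω) ≤
        penObj T (arSeq x₀ α₁ f (fun n => ε n ω)) lam b) :
    ∀ ω ∈ eventA1 T ε (Real.sqrt (2 * A₁ * σ₀ ^ 2 * Real.log (2 * T)))
        ∩ eventA2 T ε (2 * A₂ * σ₀ * Real.sqrt T * Real.log (2 * T))
        ∩ eventA3 T ε (fun ω => arSeq x₀ α₁ f (fun n => ε n ω))
            (2 * Real.sqrt 2 * A₃ * σ₀ ^ 2 * (c₁ + 1) * Real.log (2 * T) *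
              Real.sqrt (T * Real.log (2 * T)) / (1 - α₁)),
      l1On (Finset.univ.filter fun j : Fin (T + 1) =>
            2 ≤ (j : ℕ) ∧ betaVec α₁ f T j = 0)
          (βhat ω - betaVec α₁ f T) ≤
        min (((1 + k) / (1 - k)) *
              l1On (Finset.univ.filter fun j : Fin (T + 1) =>
                  2 ≤ (j : ℕ) ∧ betaVec α₁ f T j ≠ 0)
                (βhat ω - betaVec α₁ f T))
            (2 * (s : ℝ) * δ₀ / (1 - k))
          + (k / (1 - k)) * l1On {0, 1} (βhat ω - betaVec α₁ f T) := by
  rintro ω ⟨⟨-, hA₂⟩, hA₃⟩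
  set x := arSeq x₀ α₁ f (fun n => ε n ω)
  have hTpos : (0 : ℝ) < T := by exact_mod_cast (show 0 < T by omega)
  have hbasic : lam * l1Delta (βhat ω) - lam * l1Delta (betaVec α₁ f T) ≤ 2 * (1 / (2 * T)) *
      (((fun i : Fin T => ε (i + 1) ω) ᵥ* designX T x) ⬝ᵥ (βhat ω - betaVec α₁ f T)) := by
    rw [← Matrix.dotProduct_mulVec]
    exact penalized_lsq_basic_inequality _ _ _ _ _ (by positivity) (fun b => lam * l1Delta b)
      (arSeq_succ_sub_designX_mulVec_betaVec x₀ α₁ f _ T) (hmin ω _)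
  have hcol : ∀ j, |((fun i : Fin T => ε (i + 1) ω) ᵥ* designX T x) j| ≤ k * lam * T := by
    refine Fin.cases ?_ fun j => ?_
    · rw [vecMul_designX_zero T x (ε · ω), hklam, mul_assoc, sqrt_div_mul_self hTpos]
      exact hA₃.trans_eq (by ring)
    · rw [vecMul_designX_succ T x (ε · ω)]
      refine (hA₂ _ (mem_Icc.2 ⟨by omega, j.isLt⟩)).trans ?_
      have := mul_le_mul_of_nonneg_right hklam2 hTpos.le
      rw [div_sqrt_mul_self] at this
      linarith
  set E := ∑ j, |(βhat ω - betaVec α₁ f T) j|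
  have hcone : l1Delta (βhat ω) - l1Delta (betaVec α₁ f T) ≤ k * E := by
    have := hbasic.trans (mul_le_mul_of_nonneg_left (dotProduct_le_mul_sum_abs _ _ hcol)
      (by positivity))
    rw [← mul_sub, show 2 * (1 / (2 * (T : ℝ))) * (k * lam * T * E) = lam * (k * E) by
      field_simp] at this
    exact le_of_mul_le_mul_left this hlam
  exact l1On_eq_zero_le_of_l1Delta_sub_le (by omega) _ _ hk' hδ₀ hs hΔ hcone

/-- **Lemma 2: restricted `ℓ₁` estimation error.** On the event
`𝒜 = 𝒜₁ ∩ 𝒜₂ ∩ 𝒜₃`, the estimation error `e = β̂_T − β` of the penalized estimator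
satisfies `‖e_{I₃}‖₁ ≤ min{((1+k)/(1−k))‖e_{I₂}‖₁, 2sδ₀/(1−k)} + (k/(1−k))‖e_{I₁}‖₁`. -/
theorem stmt_8 {Ωs : Type*} [MeasurableSpace Ωs] (P : Measure Ωs) [IsProbabilityMeasure P]
    (T : ℕ) (hT : 2 ≤ T) (σ₀ : ℝ) (hσ₀ : 0 < σ₀) (ε : ℕ → Ωs → ℝ)
    (hmeas : ∀ i, Measurable (ε i))
    (hindep : iIndepFun ε P)
    (hident : ∀ i, P.map (ε i) = P.map (ε 1))
    (hmean : ∀ i, ∫ ω, ε i ω ∂P = 0)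
    (hsubG : ∀ i, ∀ l : ℝ, ∫ ω, Real.exp (l * ε i ω) ∂P ≤ Real.exp (l ^ 2 * σ₀ ^ 2 / 2))
    (x₀ α₁ : ℝ) (hα₁ : 0 < α₁) (hα₁' : α₁ < 1) (f : ℕ → ℝ)
    (A₁ A₂ A₃ C₁ c₁ : ℝ) (hA₁ : 1 < A₁) (hA₂ : Real.sqrt A₁ < A₂) (hA₃ : 0 < A₃)
    (hC₁ : 0 < C₁) (hc₁ : 0 < c₁)
    (hf : ∀ i ∈ Finset.Icc 1 T, |f i| ≤ C₁ * Real.sqrt (Real.log T))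
    (hfc : ∀ i ∈ Finset.Icc 1 T,
      |f i| ≤ c₁ * Real.sqrt (2 * A₁ * σ₀ ^ 2 * Real.log (2 * T)))
    (s : ℕ) (δ₀ : ℝ) (hδ₀ : 0 ≤ δ₀)
    (hs : ∃ S : Finset (Fin (T + 1)), S.card ≤ s ∧ ∀ j ∉ S, betaVec α₁ f T j = 0)
    (hΔ : ∀ j : Fin (T + 1), 2 ≤ (j : ℕ) → |betaVec α₁ f T j| ≤ δ₀)
    (k lam : ℝ) (hk : 0 < k) (hk' : k < 1) (hlam : 0 < lam)
    (hklam : k * lam = 2 * Real.sqrt 2 * A₃ * σ₀ ^ 2 * (c₁ + 1) / (1 - α₁) *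
      Real.log (2 * T) * Real.sqrt (Real.log (2 * T) / T))
    (hklam2 : 2 * A₂ * σ₀ * Real.log (2 * T) / Real.sqrt T ≤ k * lam)
    (βhat : Ωs → Fin (T + 1) → ℝ)
    (hmin : ∀ ω, ∀ b : Fin (T + 1) → ℝ,
      penObj T (arSeq x₀ α₁ f (fun n => ε n ω)) lam (βhat ω) ≤
        penObj T (arSeq x₀ α₁ f (fun n => ε n ω)) lam b) :
    ∀ ω ∈ eventA1 T ε (Real.sqrt (2 * A₁ * σ₀ ^ 2 * Real.log (2 * T)))
        ∩ eventA2 T ε (2 * A₂ * σ₀ * Real.sqrt T * Real.log (2 * T))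
        ∩ eventA3 T ε (fun ω => arSeq x₀ α₁ f (fun n => ε n ω))
            (2 * Real.sqrt 2 * A₃ * σ₀ ^ 2 * (c₁ + 1) * Real.log (2 * T) *
              Real.sqrt (T * Real.log (2 * T)) / (1 - α₁)),
      l1On (Finset.univ.filter fun j : Fin (T + 1) =>
            2 ≤ (j : ℕ) ∧ betaVec α₁ f T j = 0)
          (βhat ω - betaVec α₁ f T) ≤
        min (((1 + k) / (1 - k)) *
              l1On (Finset.univ.filter fun j : Fin (T + 1) =>
                  2 ≤ (j : ℕ) ∧ betaVec α₁ f T j ≠ 0)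
                (βhat ω - betaVec α₁ f T))
            (2 * (s : ℝ) * δ₀ / (1 - k))
          + (k / (1 - k)) * l1On {0, 1} (βhat ω - betaVec α₁ f T) :=
  stmt_8_general T hT σ₀ ε x₀ α₁ f A₁ A₂ A₃ c₁ s δ₀ hδ₀ hs hΔ k lam hk' hlam hklam hklam2 βhat hmin
end

section
/- (Fano's inequality.) Let P₁,…,P_N (N ≥ 2) be probability measures on a measurable space (Ω, ℱ), and let Z : Ω → {1,…,N} be any measurable map. Then (1/N)·Σ_{i=1}^N P_i(Z ≠ i) ≥ 1 − ((1/N²)·Σ_{i=1}^N Σ_{j=1}^N KL(P_i ‖ P_j) + log 2)/log N, where KL(P ‖ Q) denotes the Kullback–Leibler divergence of P from Q. -/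
open MeasureTheory Finset ENNReal

open Classical in
/-- Kullback–Leibler divergence: `KL(P‖Q) = ∫ log(dP/dQ) dP` when `P ≪ Q` (and the
integrand is integrable), and `+∞` otherwise. -/
noncomputable def klDiv {Ω : Type*} [MeasurableSpace Ω] (P Q : Measure Ω) : ℝ≥0∞ :=
  if P ≪ Q ∧ Integrable (fun ω => Real.log (P.rnDeriv Q ω).toReal) P
  then ENNReal.ofReal (∫ ω, Real.log (P.rnDeriv Q ω).toReal ∂P)
  else ∞

/-!
Testing the event `Z = i` bounds `KL(Pᵢ ‖ Pⱼ)` below by `kl(Pᵢ(Z = i), Pⱼ(Z = i))`, the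
divergence between two Bernoulli laws (Jensen for `x ↦ x log x` on `{Z = i}` and on its
complement). By the log-sum inequality `kl` is jointly convex, so averaging over the `N²` pairs
`(i, j)` bounds `(1/N²) ∑ KL(Pᵢ ‖ Pⱼ)` below by `kl(p, 1/N)`, where `p` is the mean probability
of a correct guess and `1/N` is the mean of `Pⱼ(Z = i)`, because `∑ᵢ Pⱼ(Z = i) = 1`.
Finally `kl(p, 1/N) ≥ p log N - log 2`, since a binary entropy is at most `log 2`.
-/

theorem mul_log_add_sub_le_mul_log_div {u v c : ℝ} (hu : 0 ≤ u) (hv : 0 ≤ v)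
    (huv : v = 0 → u = 0) (hc : 0 < c) :
    u * Real.log c + u - c * v ≤ u * Real.log (u / v) := by
  rcases hu.eq_or_lt with rfl | hu
  · simpa using mul_nonneg hc.le hv
  have hv : 0 < v := hv.lt_of_ne fun h => hu.ne' (huv h.symm)
  have hgibbs := mul_le_mul_of_nonneg_left
    (Real.one_sub_inv_le_log_of_pos (x := u / (c * v)) (by positivity)) hu.le
  rw [Real.log_div hu.ne' (by positivity), Real.log_mul hc.ne' hv.ne', inv_div] at hgibbs
  rw [Real.log_div hu.ne' hv.ne']
  have hlin : u * (1 - c * v / u) = u - c * v := by field_simp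
  linarith

theorem sum_mul_log_sum_div_sum_le {ι : Type*} (t : Finset ι) (u v : ι → ℝ)
    (hu : ∀ x ∈ t, 0 ≤ u x) (hv : ∀ x ∈ t, 0 ≤ v x) (huv : ∀ x ∈ t, v x = 0 → u x = 0) :
    (∑ x ∈ t, u x) * Real.log ((∑ x ∈ t, u x) / ∑ x ∈ t, v x)
      ≤ ∑ x ∈ t, u x * Real.log (u x / v x) := by
  set U := ∑ x ∈ t, u x
  set V := ∑ x ∈ t, v x
  rcases (sum_nonneg hu : 0 ≤ U).eq_or_lt with hU | hU
  · have hu0 := (sum_eq_zero_iff_of_nonneg hu).1 hU.symm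
    rw [show U = 0 from hU.symm, zero_mul, sum_eq_zero fun x hx => by rw [hu0 x hx, zero_mul]]
  have hV : 0 < V := by
    refine (sum_nonneg hv).lt_of_ne fun hV => hU.ne' (sum_eq_zero fun x hx => huv x hx ?_)
    exact (sum_eq_zero_iff_of_nonneg hv).1 hV.symm x hx
  calc U * Real.log (U / V) = ∑ x ∈ t, (u x * Real.log (U / V) + u x - U / V * v x) := by
        rw [sum_sub_distrib, sum_add_distrib, ← sum_mul, ← mul_sum]
        field_simp
        ring
    _ ≤ ∑ x ∈ t, u x * Real.log (u x / v x) :=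
        sum_le_sum fun x hx => mul_log_add_sub_le_mul_log_div (hu x hx) (hv x hx) (huv x hx)
          (div_pos hU hV)

/-- The divergence `kl(p, q)` between the Bernoulli laws of parameters `p` and `q`. Because
`Real.log 0 = 0`, it is only meaningful when `q = 0 → p = 0` and `q = 1 → p = 1`. -/
noncomputable def klBernoulli (p q : ℝ) : ℝ :=
  p * Real.log (p / q) + (1 - p) * Real.log ((1 - p) / (1 - q))

theorem card_mul_klBernoulli_avg_le {ι : Type*} (t : Finset ι) (p q : ι → ℝ)
    (hp₀ : ∀ x ∈ t, 0 ≤ p x) (hp : ∀ x ∈ t, p x ≤ 1) (hq₀ : ∀ x ∈ t, 0 ≤ q x)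
    (hq : ∀ x ∈ t, q x ≤ 1) (h₀ : ∀ x ∈ t, q x = 0 → p x = 0)
    (h₁ : ∀ x ∈ t, q x = 1 → p x = 1) :
    #t * klBernoulli ((∑ x ∈ t, p x) / #t) ((∑ x ∈ t, q x) / #t)
      ≤ ∑ x ∈ t, klBernoulli (p x) (q x) := by
  rcases t.eq_empty_or_nonempty with rfl | ht
  · simp
  have hc : (#t : ℝ) ≠ 0 := by exact_mod_cast ht.card_pos.ne'
  have hsucc := sum_mul_log_sum_div_sum_le t p q hp₀ hq₀ h₀
  have hfail := sum_mul_log_sum_div_sum_le t (fun x => 1 - p x) (fun x => 1 - q x)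
    (fun x hx => sub_nonneg.2 (hp x hx)) (fun x hx => sub_nonneg.2 (hq x hx))
    (fun x hx h => by rw [h₁ x hx (by linarith), sub_self])
  simp only [sum_sub_distrib, sum_const, nsmul_one] at hfail
  simp only [klBernoulli]
  rw [one_sub_div hc, one_sub_div hc, div_div_div_cancel_right₀ hc,
    div_div_div_cancel_right₀ hc, sum_add_distrib]
  calc _ = (∑ x ∈ t, p x) * Real.log ((∑ x ∈ t, p x) / ∑ x ∈ t, q x) +
        (#t - ∑ x ∈ t, p x) * Real.log ((#t - ∑ x ∈ t, p x) / (#t - ∑ x ∈ t, q x)) := by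
        field_simp
    _ ≤ _ := add_le_add hsucc hfail

theorem mul_log_inv_sub_log_two_le_klBernoulli {p q : ℝ} (hp : p ≤ 1) (hq₀ : 0 < q)
    (hq : q < 1) :
    p * Real.log q⁻¹ - Real.log 2 ≤ klBernoulli p q := by
  have hent : Real.binEntropy p ≤ Real.log 2 := Real.binEntropy_le_log_two
  have hlog : Real.log (1 - q) ≤ 0 := Real.log_nonpos (by linarith) (by linarith)
  have hsplit (x : ℝ) {y : ℝ} (hy : y ≠ 0) :
      x * Real.log (x / y) = x * Real.log x - x * Real.log y := by
    rcases eq_or_ne x 0 with rfl | hx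
    · simp
    · rw [Real.log_div hx hy, mul_sub]
  rw [klBernoulli, hsplit _ hq₀.ne', hsplit _ (sub_pos.2 hq).ne', Real.log_inv]
  rw [Real.binEntropy, Real.log_inv, Real.log_inv] at hent
  nlinarith [mul_nonneg (sub_nonneg.2 hp) (neg_nonneg.2 hlog)]

theorem sq_card_mul_le_sum_klBernoulli {ι : Type*} [Fintype ι] (hι : 1 < Fintype.card ι)
    (p : ι → ℝ) (q : ι → ι → ℝ) (hp₀ : ∀ i, 0 ≤ p i) (hp : ∀ i, p i ≤ 1)
    (hq₀ : ∀ i j, 0 ≤ q i j) (hq : ∀ i j, q i j ≤ 1) (hq_sum : ∀ j, ∑ i, q i j = 1)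
    (h₀ : ∀ i j, q i j = 0 → p i = 0) (h₁ : ∀ i j, q i j = 1 → p i = 1) :
    (Fintype.card ι : ℝ) ^ 2 *
        ((∑ i, p i) / Fintype.card ι * Real.log (Fintype.card ι) - Real.log 2)
      ≤ ∑ i, ∑ j, klBernoulli (p i) (q i j) := by
  have hn : (1 : ℝ) < Fintype.card ι := by exact_mod_cast hι
  have hconv := card_mul_klBernoulli_avg_le (univ : Finset (ι × ι)) (fun x => p x.1)
    (fun x => q x.1 x.2) (fun x _ => hp₀ x.1) (fun x _ => hp x.1) (fun x _ => hq₀ x.1 x.2)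
    (fun x _ => hq x.1 x.2) (fun x _ => h₀ x.1 x.2) (fun x _ => h₁ x.1 x.2)
  have hcard : (#(univ : Finset (ι × ι)) : ℝ) = (Fintype.card ι : ℝ) ^ 2 := by
    simp [sq]
  have hp_avg : (∑ x : ι × ι, p x.1) / (Fintype.card ι : ℝ) ^ 2
      = (∑ i, p i) / Fintype.card ι := by
    rw [Fintype.sum_prod_type]
    simp only [sum_const, card_univ, nsmul_eq_mul, ← mul_sum]
    field_simp
  have hq_avg : (∑ x : ι × ι, q x.1 x.2) / (Fintype.card ι : ℝ) ^ 2
      = (Fintype.card ι : ℝ)⁻¹ := by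
    rw [Fintype.sum_prod_type, sum_comm]
    simp only [hq_sum, sum_const, card_univ, nsmul_eq_mul, mul_one]
    field_simp
  rw [hcard, hp_avg, hq_avg, Fintype.sum_prod_type] at hconv
  refine le_trans ?_ hconv
  have hp_avg_le : (∑ i, p i) / Fintype.card ι ≤ 1 := by
    rw [div_le_one (by linarith)]
    simpa using sum_le_sum fun i (_ : i ∈ univ) => hp i
  have hkl := mul_log_inv_sub_log_two_le_klBernoulli hp_avg_le (inv_pos.2 (by linarith))
    (inv_lt_one_of_one_lt₀ hn)
  rw [inv_inv] at hkl
  gcongr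

theorem ENNReal.ofReal_sum_le {ι : Type*} (s : Finset ι) (f : ι → ℝ) :
    ENNReal.ofReal (∑ i ∈ s, f i) ≤ ∑ i ∈ s, ENNReal.ofReal (f i) :=
  le_sum_of_subadditive ENNReal.ofReal ENNReal.ofReal_zero.le (fun _ _ => ENNReal.ofReal_add_le)
    s f

theorem one_sub_div_le_ofReal_one_sub {n : ℕ} (hn : n ≠ 0) {x L c : ℝ} {K : ℝ≥0∞}
    (hx : 0 ≤ x) (hL : 0 < L) (hK : ENNReal.ofReal ((n : ℝ) ^ 2 * (x * L - c)) ≤ K) :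
    1 - (((n : ℝ≥0∞) ^ 2)⁻¹ * K + ENNReal.ofReal c) / ENNReal.ofReal L
      ≤ ENNReal.ofReal (1 - x) := by
  have hn2 : ((n : ℝ≥0∞) ^ 2) ≠ 0 := pow_ne_zero 2 (Nat.cast_ne_zero.2 hn)
  have hK' : ENNReal.ofReal (x * L - c) ≤ ((n : ℝ≥0∞) ^ 2)⁻¹ * K := by
    rw [ENNReal.ofReal_mul (by positivity), ENNReal.ofReal_pow (Nat.cast_nonneg n),
      ENNReal.ofReal_natCast] at hK
    rw [← ENNReal.inv_mul_cancel_left hn2 (by simp) (b := ENNReal.ofReal _)]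
    gcongr
  have hx' :
      ENNReal.ofReal x ≤ (((n : ℝ≥0∞) ^ 2)⁻¹ * K + ENNReal.ofReal c) / ENNReal.ofReal L := by
    rw [ENNReal.le_div_iff_mul_le (Or.inl (by simpa using hL)) (Or.inl ENNReal.ofReal_ne_top),
      ← ENNReal.ofReal_mul hx]
    calc ENNReal.ofReal (x * L) = ENNReal.ofReal (x * L - c + c) := by rw [sub_add_cancel]
      _ ≤ ENNReal.ofReal (x * L - c) + ENNReal.ofReal c := ENNReal.ofReal_add_le
      _ ≤ _ := by gcongr
  rw [ENNReal.ofReal_sub _ hx, ENNReal.ofReal_one]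
  exact tsub_le_tsub_left hx' 1

section Measure

variable {Ω : Type*} [MeasurableSpace Ω] {μ ν : Measure Ω} {s : Set Ω}

theorem MeasureTheory.Measure.rnDeriv_restrict_restrict [SigmaFinite μ] [SigmaFinite ν]
    (hμν : μ ≪ ν) (hs : MeasurableSet s) :
    (μ.restrict s).rnDeriv (ν.restrict s) =ᵐ[ν.restrict s] μ.rnDeriv ν := by
  have hμ : μ.restrict s = (ν.restrict s).withDensity (μ.rnDeriv ν) := by
    rw [← restrict_withDensity hs, Measure.withDensity_rnDeriv_eq μ ν hμν]
  rw [hμ]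
  exact Measure.rnDeriv_withDensity _ (Measure.measurable_rnDeriv μ ν)

theorem mul_log_le_setIntegral_llr [IsFiniteMeasure μ] [IsFiniteMeasure ν] (hμν : μ ≪ ν)
    (h_int : Integrable (llr μ ν) μ) (hs : MeasurableSet s) :
    μ.real s * Real.log (μ.real s / ν.real s) ≤ ∫ x in s, llr μ ν x ∂μ := by
  have hd := Measure.rnDeriv_restrict_restrict hμν hs
  have hjensen := mul_le_integral_rnDeriv_of_ac Real.convexOn_mul_log
    Real.continuous_mul_log.continuousWithinAt ?_ (hμν.restrict s)
  · rw [measureReal_restrict_apply_univ, measureReal_restrict_apply_univ] at hjensen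
    calc μ.real s * Real.log (μ.real s / ν.real s)
        = ν.real s * (μ.real s / ν.real s * Real.log (μ.real s / ν.real s)) := by
          rcases eq_or_ne (ν.real s) 0 with hν | hν
          · have hμ : μ.real s = 0 := by
              rw [measureReal_eq_zero_iff] at hν ⊢
              exact hμν hν
            simp [hμ, hν]
          · rw [← mul_assoc, mul_div_cancel₀ _ hν]
      _ ≤ _ := hjensen
      _ = ∫ x in s, (μ.rnDeriv ν x).toReal * Real.log (μ.rnDeriv ν x).toReal ∂ν :=
          integral_congr_ae (hd.mono fun x hx => by simp only [hx])
      _ = ∫ x in s, llr μ ν x ∂μ := setIntegral_toReal_rnDeriv_mul hμν hs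
  · refine Integrable.congr ((integrable_rnDeriv_mul_log_iff hμν).2 h_int).restrict ?_
    exact hd.mono fun x hx => by simp only [hx]

theorem klBernoulli_le_integral_llr [IsProbabilityMeasure μ] [IsProbabilityMeasure ν]
    (hμν : μ ≪ ν) (h_int : Integrable (llr μ ν) μ) (hs : MeasurableSet s) :
    klBernoulli (μ.real s) (ν.real s) ≤ ∫ x, llr μ ν x ∂μ := by
  rw [← integral_add_compl hs h_int, klBernoulli, ← probReal_compl_eq_one_sub hs,
    ← probReal_compl_eq_one_sub hs]
  exact add_le_add (mul_log_le_setIntegral_llr hμν h_int hs)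
    (mul_log_le_setIntegral_llr hμν h_int hs.compl)

theorem ofReal_klBernoulli_le_klDiv [IsProbabilityMeasure μ] [IsProbabilityMeasure ν]
    (hs : MeasurableSet s) :
    ENNReal.ofReal (klBernoulli (μ.real s) (ν.real s)) ≤ klDiv μ ν := by
  unfold klDiv
  split_ifs with h
  · exact ENNReal.ofReal_le_ofReal (klBernoulli_le_integral_llr h.1 h.2 hs)
  · exact le_top

theorem ofReal_sq_card_mul_le_sum_klDiv {ι : Type*} [Fintype ι] (hι : 1 < Fintype.card ι)
    {P : ι → Measure Ω} [∀ i, IsProbabilityMeasure (P i)] (hac : ∀ i j, P i ≪ P j)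
    {Z : Ω → ι} (hZ : ∀ i, MeasurableSet (Z ⁻¹' {i})) :
    ENNReal.ofReal ((Fintype.card ι : ℝ) ^ 2 * ((∑ i, (P i).real (Z ⁻¹' {i})) / Fintype.card ι
        * Real.log (Fintype.card ι) - Real.log 2))
      ≤ ∑ i, ∑ j, klDiv (P i) (P j) := by
  have hnull (i j : ι) {s : Set Ω} (h : (P j).real s = 0) : (P i).real s = 0 := by
    rw [measureReal_eq_zero_iff] at h ⊢
    exact hac i j h
  have hfano := sq_card_mul_le_sum_klBernoulli hι
    (fun i => (P i).real (Z ⁻¹' {i})) (fun i j => (P j).real (Z ⁻¹' {i}))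
    (fun _ => measureReal_nonneg) (fun _ => measureReal_le_one)
    (fun _ _ => measureReal_nonneg) (fun _ _ => measureReal_le_one)
    (fun j => by simpa using sum_measureReal_preimage_singleton (μ := P j) univ fun i _ => hZ i)
    (fun i j => hnull i j)
    (fun i j h => by
      have hcompl := hnull i j (by rw [probReal_compl_eq_one_sub (hZ i), h, sub_self])
      rwa [probReal_compl_eq_one_sub (hZ i), sub_eq_zero, eq_comm] at hcompl)
  refine (ENNReal.ofReal_le_ofReal hfano).trans <|
    (ENNReal.ofReal_sum_le _ _).trans (sum_le_sum fun i _ => ?_)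
  exact (ENNReal.ofReal_sum_le _ _).trans
    (sum_le_sum fun j _ => ofReal_klBernoulli_le_klDiv (hZ i))

theorem card_inv_mul_sum_measure_compl {ι : Type*} [Fintype ι] [Nonempty ι]
    {P : ι → Measure Ω} [∀ i, IsProbabilityMeasure (P i)] {A : ι → Set Ω}
    (hA : ∀ i, MeasurableSet (A i)) :
    (Fintype.card ι : ℝ≥0∞)⁻¹ * ∑ i, P i (A i)ᶜ
      = ENNReal.ofReal (1 - (∑ i, (P i).real (A i)) / Fintype.card ι) := by
  have hcompl (i : ι) : P i (A i)ᶜ = ENNReal.ofReal (1 - (P i).real (A i)) := by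
    rw [← probReal_compl_eq_one_sub (hA i), ofReal_measureReal]
  rw [sum_congr rfl fun i _ => hcompl i,
    ← ENNReal.ofReal_sum_of_nonneg fun i _ => sub_nonneg.2 measureReal_le_one,
    ← ENNReal.ofReal_natCast, ← ENNReal.ofReal_inv_of_pos (by positivity),
    ← ENNReal.ofReal_mul (by positivity), sum_sub_distrib]
  congr 1
  simp only [sum_const, card_univ, nsmul_eq_mul, mul_one]
  field_simp

end Measure

/-- **Fano's inequality.** Let `P₁,…,P_N` (`N ≥ 2`) be probability measures
on a measurable space `Ω`, and let `Z : Ω → {1,…,N}` be any measurable map. Then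
`(1/N)·Σᵢ Pᵢ(Z ≠ i) ≥ 1 − ((1/N²)·Σᵢⱼ KL(Pᵢ‖Pⱼ) + log 2)/log N`. -/
theorem stmt_12 {Ω : Type*} [MeasurableSpace Ω] (N : ℕ) (hN : 2 ≤ N)
    (P : Fin N → Measure Ω) (hP : ∀ i, IsProbabilityMeasure (P i))
    (Z : Ω → Fin N) (hZ : Measurable Z) :
    1 - (((N : ℝ≥0∞) ^ 2)⁻¹ * (∑ i, ∑ j, klDiv (P i) (P j)) + ENNReal.ofReal (Real.log 2))
        / ENNReal.ofReal (Real.log N)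
      ≤ (N : ℝ≥0∞)⁻¹ * ∑ i, P i {ω | Z ω ≠ i} := by
  by_cases hac : ∀ i j, P i ≪ P j
  swap
  · obtain ⟨i, j, hij⟩ : ∃ i j, ¬ P i ≪ P j := by simpa using hac
    have hK : ∑ i, ∑ j, klDiv (P i) (P j) = ∞ := ENNReal.sum_eq_top.2
      ⟨i, mem_univ i, ENNReal.sum_eq_top.2 ⟨j, mem_univ j, by simp [klDiv, hij]⟩⟩
    simp [hK, ENNReal.top_div_of_ne_top]
  have : NeZero N := ⟨by omega⟩
  have hA (i : Fin N) : MeasurableSet (Z ⁻¹' {i}) := hZ (measurableSet_singleton i)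
  have hK := ofReal_sq_card_mul_le_sum_klDiv (by rw [Fintype.card_fin]; omega) hac hA
  have herr := card_inv_mul_sum_measure_compl (P := P) hA
  simp only [Fintype.card_fin] at hK herr
  change _ ≤ (N : ℝ≥0∞)⁻¹ * ∑ i, P i (Z ⁻¹' {i})ᶜ
  rw [herr]
  exact one_sub_div_le_ofReal_one_sub (NeZero.ne N)
    (div_nonneg (sum_nonneg fun _ _ => measureReal_nonneg) (Nat.cast_nonneg N))
    (Real.log_pos (by exact_mod_cast hN)) hK
end

section
/- Let T ≥ 3, let α₁, α₂ ∈ ℝ with |α₁| < 1, let P_α be the T×T lower-triangular matrix with (P_α)_{ij} = α^{i−j} for i ≥ j and 0 otherwise, and set Σ_k = P_{α_k}·P_{α_k}ᵀ for k = 1, 2. Then for every i with 2 ≤ i ≤ T−1, the diagonal entries satisfy (Σ₂⁻¹Σ₁)_{ii} = −α₁α₂·(2·(1−α₁^{2i−2})/(1−α₁²) + α₁^{2i−2}) + (α₂²+1)·(1−α₁^{2i})/(1−α₁²). Moreover, if |α₁| ≤ δ_s and |α₂| ≤ δ_s for some δ_s ∈ (0,1), then (Σ₂⁻¹Σ₁)_{ii}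 ≤ (3δ_s² + 1)/(1 − δ_s²) for all 2 ≤ i ≤ T−1. -/
/-!
Since `P_α = (1 - α S)⁻¹` for the down-shift `S`, the precision matrix is
`Σ_α⁻¹ = B_αᵀ B_α` with `B_α = 1 - α S` lower bidiagonal. Hence the `a`-th diagonal entry of
`Σ₂⁻¹ Σ₁` only involves the three entries `Σ₁(a-1,a), Σ₁(a,a), Σ₁(a+1,a)`, and
`Σ_α(a,b) = α^(a-b) ∑_{m ≤ b} α^(2m)` for `b ≤ a`. Summing the geometric series gives the
closed form, and bounding each partial sum by `1 / (1 - δ²)` gives the estimate.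
-/

open Matrix

/-- The T×T lower-triangular Toeplitz matrix `P_α` with `(P_α)_{ij} = α^{i−j}` for `i ≥ j`. -/
noncomputable def Pmat (T : ℕ) (α : ℝ) : Matrix (Fin T) (Fin T) ℝ :=
  Matrix.of fun i j => if (j : ℕ) ≤ (i : ℕ) then α ^ ((i : ℕ) - (j : ℕ)) else 0

/-- `Σ_k = P_{α_k}·P_{α_k}ᵀ`. -/
noncomputable def SigmaMat (T : ℕ) (α : ℝ) : Matrix (Fin T) (Fin T) ℝ :=
  Pmat T α * (Pmat T α)ᵀ

open Finset

noncomputable def Bmat (T : ℕ) (α : ℝ) : Matrix (Fin T) (Fin T) ℝ :=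
  Matrix.of fun i j => if i = j then 1 else if (i : ℕ) = j + 1 then -α else 0

-- The `i`-th diagonal entry of `Σ_β⁻¹ Σ_α`, counting rows from `i = 1`.
noncomputable def sigmaInvMulDiag (α β : ℝ) (i : ℕ) : ℝ :=
  (1 + β ^ 2) * ∑ m ∈ range i, (α ^ 2) ^ m -
    α * β * (∑ m ∈ range (i - 1), (α ^ 2) ^ m + ∑ m ∈ range i, (α ^ 2) ^ m)

section Bidiagonal

variable {T : ℕ} (α : ℝ) (M : Matrix (Fin T) (Fin T) ℝ)

lemma Bmat_mul_apply_of_val_eq_zero {k : Fin T} (hk : (k : ℕ) = 0) (j : Fin T) :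
    (Bmat T α * M) k j = M k j := by
  rw [mul_apply, Fintype.sum_eq_single k]
  · simp [Bmat]
  · intro m hm
    simp [Bmat, Ne.symm hm, hk]

lemma Bmat_mul_apply_of_val_eq_succ {k k' : Fin T} (hk : (k : ℕ) = k' + 1) (j : Fin T) :
    (Bmat T α * M) k j = M k j - α * M k' j := by
  have hne : k ≠ k' := Fin.ne_of_val_ne (by omega)
  rw [mul_apply, Fintype.sum_eq_add k k' hne]
  · simp only [Bmat, of_apply, ↓reduceIte, one_mul, hne, hk, neg_mul]
    ring
  · rintro m ⟨hmk, hmk'⟩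
    have : (k : ℕ) ≠ m + 1 := fun h => hmk' (Fin.ext (by omega))
    simp [Bmat, Ne.symm hmk, this]

lemma transpose_Bmat_mul_apply_of_val_eq_succ {k k' : Fin T} (hk : (k' : ℕ) = k + 1)
    (j : Fin T) : ((Bmat T α)ᵀ * M) k j = M k j - α * M k' j := by
  have hne : k ≠ k' := Fin.ne_of_val_ne (by omega)
  rw [mul_apply, Fintype.sum_eq_add k k' hne]
  · simp only [Bmat, transpose_apply, of_apply, ↓reduceIte, one_mul, hne.symm, hk, neg_mul]
    ring
  · rintro m ⟨hmk, hmk'⟩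
    have : (m : ℕ) ≠ k + 1 := fun h => hmk' (Fin.ext (by omega))
    simp [Bmat, hmk, this]

lemma transpose_Bmat_mul_Bmat_mul_apply_self {a b c : Fin T} (hb : (a : ℕ) = b + 1)
    (hc : (c : ℕ) = a + 1) :
    ((Bmat T α)ᵀ * Bmat T α * M) a a = (1 + α ^ 2) * M a a - α * (M b a + M c a) := by
  rw [Matrix.mul_assoc, transpose_Bmat_mul_apply_of_val_eq_succ α _ hc,
    Bmat_mul_apply_of_val_eq_succ α _ hb, Bmat_mul_apply_of_val_eq_succ α _ hc]
  ring

lemma Bmat_mul_Pmat : Bmat T α * Pmat T α = 1 := by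
  ext i j
  obtain hi | ⟨i', hi⟩ : (i : ℕ) = 0 ∨ ∃ i' : Fin T, (i : ℕ) = i' + 1 :=
    (Nat.eq_zero_or_eq_succ_pred i).imp id fun h => ⟨⟨i - 1, by omega⟩, h⟩
  · rw [Bmat_mul_apply_of_val_eq_zero α _ hi]
    simp only [Pmat, of_apply, one_apply, Fin.ext_iff, hi]
    split_ifs <;> first | omega | simp
  · rw [Bmat_mul_apply_of_val_eq_succ α _ hi]
    simp only [Pmat, of_apply, one_apply, Fin.ext_iff, hi]
    split_ifs <;> try omega
    · rw [show (i' : ℕ) + 1 - j = (i' - j) + 1 by omega, pow_succ]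
      ring
    · simp [show (j : ℕ) = i' + 1 by omega]
    · simp

end Bidiagonal

section Covariance

variable {T : ℕ} (α : ℝ)

lemma SigmaMat_isSymm : (SigmaMat T α).IsSymm := isSymm_mul_transpose_self _

lemma SigmaMat_inv : (SigmaMat T α)⁻¹ = (Bmat T α)ᵀ * Bmat T α := by
  have hPB : Pmat T α * Bmat T α = 1 := mul_eq_one_comm.mp (Bmat_mul_Pmat α)
  apply inv_eq_left_inv
  calc (Bmat T α)ᵀ * Bmat T α * (Pmat T α * (Pmat T α)ᵀ)
      = (Bmat T α)ᵀ * (Bmat T α * Pmat T α) * (Pmat T α)ᵀ := by simp only [Matrix.mul_assoc]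
    _ = (Pmat T α * Bmat T α)ᵀ := by rw [Bmat_mul_Pmat, Matrix.mul_one, transpose_mul]
    _ = 1 := by rw [hPB, transpose_one]

lemma SigmaMat_apply_of_le {a b : Fin T} (hba : (b : ℕ) ≤ a) :
    SigmaMat T α a b = α ^ ((a : ℕ) - b) * ∑ m ∈ range (b + 1), (α ^ 2) ^ m := by
  have hterm : ∀ k : ℕ, (if k ≤ (a : ℕ) then α ^ ((a : ℕ) - k) else 0) *
      (if k ≤ (b : ℕ) then α ^ ((b : ℕ) - k) else 0) =
        if k < b + 1 then α ^ ((a : ℕ) - b) * (α ^ 2) ^ ((b : ℕ) - k) else 0 := by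
    intro k
    by_cases hk : k ≤ b
    · rw [if_pos (hk.trans hba), if_pos hk, if_pos (Nat.lt_succ_of_le hk), ← pow_mul, ← pow_add,
        ← pow_add]
      congr 1
      omega
    · rw [if_neg hk, mul_zero, if_neg (by omega)]
  have hreflect := sum_range_reflect (fun m => (α ^ 2) ^ m) (b + 1)
  simp only [Nat.add_sub_cancel] at hreflect
  calc SigmaMat T α a b
      = ∑ k ∈ range T, if k < b + 1 then α ^ ((a : ℕ) - b) * (α ^ 2) ^ ((b : ℕ) - k) else 0 := by
        rw [← Fin.sum_univ_eq_sum_range]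
        simp only [SigmaMat, Pmat, mul_apply, transpose_apply, of_apply, hterm]
    _ = ∑ k ∈ range (b + 1), α ^ ((a : ℕ) - b) * (α ^ 2) ^ ((b : ℕ) - k) := by
        rw [← sum_filter]
        congr 1
        ext k
        simp only [mem_filter, mem_range]
        omega
    _ = _ := by rw [← mul_sum, hreflect]

lemma SigmaMat_inv_mul_SigmaMat_apply_self (β : ℝ) {a b c : Fin T} (hb : (a : ℕ) = b + 1)
    (hc : (c : ℕ) = a + 1) :
    ((SigmaMat T β)⁻¹ * SigmaMat T α) a a = sigmaInvMulDiag α β (a + 1) := by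
  rw [SigmaMat_inv, transpose_Bmat_mul_Bmat_mul_apply_self β _ hb hc,
    (SigmaMat_isSymm α).apply a b, SigmaMat_apply_of_le α le_rfl,
    SigmaMat_apply_of_le α (show (b : ℕ) ≤ a by omega),
    SigmaMat_apply_of_le α (show (a : ℕ) ≤ c by omega), Nat.sub_self,
    show (a : ℕ) - b = 1 by omega, show (c : ℕ) - a = 1 by omega, ← hb, sigmaInvMulDiag,
    Nat.add_sub_cancel]
  ring

end Covariance

section DiagonalFormula

variable (α β : ℝ)

lemma sigmaInvMulDiag_eq (hα : α ^ 2 ≠ 1) {i : ℕ} (hi : 1 ≤ i) :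
    sigmaInvMulDiag α β i =
      -(α * β) * (2 * (1 - α ^ (2 * i - 2)) / (1 - α ^ 2) + α ^ (2 * i - 2)) +
        (β ^ 2 + 1) * (1 - α ^ (2 * i)) / (1 - α ^ 2) := by
  obtain ⟨n, rfl⟩ := Nat.exists_eq_add_of_le' hi
  have h1 : 1 - α ^ 2 ≠ 0 := sub_ne_zero.mpr (Ne.symm hα)
  rw [sigmaInvMulDiag, geom_sum_eq hα, geom_sum_eq hα, Nat.add_sub_cancel,
    show 2 * (n + 1) - 2 = 2 * n by omega, pow_mul, pow_mul, pow_succ]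
  field_simp
  ring

lemma geom_sum_sq_le_of_abs_le {δ : ℝ} (hα : |α| ≤ δ) (hδ : δ < 1) (n : ℕ) :
    ∑ m ∈ range n, (α ^ 2) ^ m ≤ 1 / (1 - δ ^ 2) := by
  have hsq : α ^ 2 ≤ δ ^ 2 := sq_le_sq' (neg_le_of_abs_le hα) (le_of_abs_le hα)
  calc ∑ m ∈ range n, (α ^ 2) ^ m ≤ ∑ m ∈ Ico 0 n, (δ ^ 2) ^ m := by
        rw [range_eq_Ico]
        gcongr
    _ ≤ (δ ^ 2) ^ 0 / (1 - δ ^ 2) :=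
        geom_sum_Ico_le_of_lt_one (sq_nonneg δ) (by nlinarith [abs_nonneg α])
    _ = 1 / (1 - δ ^ 2) := by rw [pow_zero]

lemma sigmaInvMulDiag_le {δ : ℝ} (hα : |α| ≤ δ) (hβ : |β| ≤ δ) (hδ : δ < 1) (i : ℕ) :
    sigmaInvMulDiag α β i ≤ (3 * δ ^ 2 + 1) / (1 - δ ^ 2) := by
  have hδ₀ : 0 ≤ δ := (abs_nonneg α).trans hα
  have hβsq : β ^ 2 ≤ δ ^ 2 := sq_le_sq' (neg_le_of_abs_le hβ) (le_of_abs_le hβ)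
  have hαβ : -(α * β) ≤ δ ^ 2 := by
    rw [sq]
    exact (neg_le_abs _).trans (abs_mul α β ▸ mul_le_mul hα hβ (abs_nonneg β) hδ₀)
  have hG := geom_sum_sq_le_of_abs_le α hα hδ
  have h1 : 0 < 1 - δ ^ 2 := by nlinarith
  calc sigmaInvMulDiag α β i
      = (1 + β ^ 2) * ∑ m ∈ range i, (α ^ 2) ^ m +
        -(α * β) * (∑ m ∈ range (i - 1), (α ^ 2) ^ m + ∑ m ∈ range i, (α ^ 2) ^ m) := by
        rw [sigmaInvMulDiag]
        ring
    _ ≤ (1 + δ ^ 2) * (1 / (1 - δ ^ 2)) + δ ^ 2 * (1 / (1 - δ ^ 2) + 1 / (1 - δ ^ 2)) := by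
        gcongr
        exacts [hG _, hG _, hG _]
    _ = (3 * δ ^ 2 + 1) / (1 - δ ^ 2) := by
        field_simp
        ring

end DiagonalFormula

/-- Let `T ≥ 3`, `|α₁| < 1`, and `Σ_k = P_{α_k}P_{α_k}ᵀ`. Then for every
(1-indexed) `i` with `2 ≤ i ≤ T−1`, the diagonal entries satisfy
`(Σ₂⁻¹Σ₁)_{ii} = −α₁α₂·(2·(1−α₁^{2i−2})/(1−α₁²) + α₁^{2i−2}) + (α₂²+1)·(1−α₁^{2i})/(1−α₁²)`.
Moreover, if `|α₁| ≤ δ_s` and `|α₂| ≤ δ_s` for some `δ_s ∈ (0,1)`, then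
`(Σ₂⁻¹Σ₁)_{ii} ≤ (3δ_s² + 1)/(1 − δ_s²)` for all such `i`. -/
theorem stmt_19 (T : ℕ) (α₁ α₂ : ℝ) (hα₁ : |α₁| < 1) :
    (∀ i : ℕ, (hi2 : 2 ≤ i) → (hiT : i ≤ T - 1) →
      ((SigmaMat T α₂)⁻¹ * SigmaMat T α₁) ⟨i - 1, by omega⟩ ⟨i - 1, by omega⟩ =
        -(α₁ * α₂) * (2 * (1 - α₁ ^ (2 * i - 2)) / (1 - α₁ ^ 2) + α₁ ^ (2 * i - 2)) +
          (α₂ ^ 2 + 1) * (1 - α₁ ^ (2 * i)) / (1 - α₁ ^ 2)) ∧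
    (∀ δs : ℝ, 0 < δs → δs < 1 → |α₁| ≤ δs → |α₂| ≤ δs →
      ∀ i : ℕ, (hi2 : 2 ≤ i) → (hiT : i ≤ T - 1) →
        ((SigmaMat T α₂)⁻¹ * SigmaMat T α₁) ⟨i - 1, by omega⟩ ⟨i - 1, by omega⟩ ≤
          (3 * δs ^ 2 + 1) / (1 - δs ^ 2)) := by
  have hdiag : ∀ i : ℕ, ∀ (hi2 : 2 ≤ i) (hiT : i ≤ T - 1),
      ((SigmaMat T α₂)⁻¹ * SigmaMat T α₁) ⟨i - 1, by omega⟩ ⟨i - 1, by omega⟩ =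
        sigmaInvMulDiag α₁ α₂ i := fun i hi2 hiT => by
    rw [SigmaMat_inv_mul_SigmaMat_apply_self α₁ α₂ (b := ⟨i - 2, by omega⟩)
      (c := ⟨i, by omega⟩) (by dsimp only; omega) (by dsimp only; omega)]
    congr 1
    exact Nat.sub_add_cancel (by omega)
  refine ⟨fun i hi2 hiT => ?_, fun δs _ hδ1 h₁ h₂ i hi2 hiT => ?_⟩
  · rw [hdiag i hi2 hiT]
    exact sigmaInvMulDiag_eq α₁ α₂ ((sq_lt_one_iff_abs_lt_one α₁).mpr hα₁).ne (by omega)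
  · rw [hdiag i hi2 hiT]
    exact sigmaInvMulDiag_le α₁ α₂ h₁ h₂ hδ1 i
end
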